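/- arXiv:math/0408092 — 5 statements merged into one kernel-verified Lean document; each statement's English description precedes it below -/
import Mathlib

section
/- Let m ≥ 2 be an integer and define β₁ = m+1-(m+2)√((m-1)/(m+1)). Then f₁(m) := 4 + (m+1) - (m+4)β₁² ≥ 0. -/
theorem f1_nonneg (m : ℤ) (hm : 2 ≤ m)
    (β₁ : ℝ) (hβ₁ : β₁ = m + 1 - (m + 2) * Real.sqrt ((m - 1) / (m + 1))) :
    0 ≤ 4 + (m + 1 : ℝ) - (m + 4) * β₁ ^ 2 := by
  have hm' : (2:ℝ) ≤ m := by exact_mod_cast hm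
  set t := Real.sqrt ((m - 1) / ((m:ℝ) + 1)) with ht
  have h1 : (0:ℝ) < (m:ℝ) + 1 := by linarith
  have h2 : (0:ℝ) < (m:ℝ) + 2 := by linarith
  have hlo : (m:ℝ) / (m + 2) ≤ t := by
    rw [ht]
    rw [show ((m:ℝ)) / (m + 2) = Real.sqrt (((m:ℝ) / (m + 2))^2) by
      rw [Real.sqrt_sq (by positivity)]]
    apply Real.sqrt_le_sqrt
    rw [div_pow, div_le_div_iff₀ (by positivity) h1]
    nlinarith
  have hhi : t ≤ ((m:ℝ) + 1) / (m + 2) := by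
    rw [ht]
    rw [show ((m:ℝ) + 1) / (m + 2) = Real.sqrt ((((m:ℝ) + 1) / (m + 2))^2) by
      rw [Real.sqrt_sq (by positivity)]]
    apply Real.sqrt_le_sqrt
    rw [div_pow, div_le_div_iff₀ h1 (by positivity)]
    nlinarith
  have hb0 : 0 ≤ β₁ := by
    rw [hβ₁]
    have := mul_le_mul_of_nonneg_left hhi (le_of_lt h2)
    rw [mul_div_cancel₀ _ (ne_of_gt h2)] at this
    linarith
  have hb1 : β₁ ≤ 1 := by
    rw [hβ₁]
    have := mul_le_mul_of_nonneg_left hlo (le_of_lt h2)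
    rw [mul_div_cancel₀ _ (ne_of_gt h2)] at this
    linarith
  nlinarith [sq_nonneg β₁, mul_le_one₀ hb1 hb0 hb1]
end

section
/- Let m ≥ 2 be an integer and define β₂ = m+1-m√((m+1)/(m-1)). Then f₂(m) := -2 + (m+1) - (m+2)β₂² ≥ 0. -/
theorem f2_nonneg (m : ℤ) (hm : 2 ≤ m)
    (β₂ : ℝ) (hβ₂ : β₂ = m + 1 - m * Real.sqrt ((m + 1) / (m - 1))) :
    0 ≤ -2 + (m + 1 : ℝ) - (m + 2) * β₂ ^ 2 := by
  have ha : (2 : ℝ) ≤ (m : ℝ) := by exact_mod_cast hm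
  set a : ℝ := (m : ℝ) with ha_def
  have hden : (0 : ℝ) < a - 1 := by linarith
  have hfrac : (0 : ℝ) ≤ (a + 1) / (a - 1) := by positivity
  set s : ℝ := Real.sqrt ((a + 1) / (a - 1)) with hs_def
  have hs0 : 0 ≤ s := Real.sqrt_nonneg _
  have hs2e : s ^ 2 = (a + 1) / (a - 1) := Real.sq_sqrt hfrac
  have hs2m : s ^ 2 * (a - 1) = a + 1 := by
    rw [hs2e]; field_simp
  subst hβ₂
  have hQ : (a - 1) - (a + 2) * ((a + 1) ^ 2 + a ^ 2 * s ^ 2) < 0 := by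
    nlinarith [mul_nonneg (mul_nonneg (by linarith : (0:ℝ) ≤ a + 2) (sq_nonneg a)) (sq_nonneg s),
      sq_nonneg (a + 1), sq_nonneg a]
  have hR : 0 ≤ 2 * a * (a + 1) * (a + 2) * s := by positivity
  have hD : 0 ≤ (2 * a * (a + 1) * (a + 2) * s) ^ 2
      - ((a - 1) - (a + 2) * ((a + 1) ^ 2 + a ^ 2 * s ^ 2)) ^ 2 := by
    have h1 : (2 * a * (a + 1) * (a + 2) * s) ^ 2
        - ((a - 1) - (a + 2) * ((a + 1) ^ 2 + a ^ 2 * s ^ 2)) ^ 2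
        = (4*a^6 + 4*a^5 - 16*a^4 - 8*a^3 - 5*a^2 - 6*a - 9) / (a - 1) ^ 2 := by
      have hne : (a - 1) ≠ 0 := ne_of_gt hden
      rw [eq_div_iff (pow_ne_zero 2 hne)]
      linear_combination ((-a^7 - 3*a^6 + 4*a^4) * s^2
        + (a^7 + 5*a^6 + 8*a^5 - 6*a^4 - 22*a^3 - 4*a^2)) * hs2m
    rw [h1]
    apply div_nonneg _ (sq_nonneg _)
    nlinarith [sq_nonneg (a - 2), sq_nonneg (a * (a - 2)), sq_nonneg (a ^ 2 * (a - 2)),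
      mul_nonneg (mul_nonneg (sq_nonneg a) (sq_nonneg a)) (by linarith : (0:ℝ) ≤ a - 2)]
  nlinarith [hD, hQ, hR, mul_nonneg hR hs0]
end

section
/- Let m ≥ 2 be an integer and define β₁ = m+1-(m+2)√((m-1)/(m+1)) and β₂ = m+1-m√((m+1)/(m-1)). Then |β₁| < 1, |β₂| < 1, |β₁| + |β₂|/2 < 1, and |β₂| + |β₁|/2 < 1. -/
/-!
Put `r = √((m - 1)/(m + 1))`. Then `0 < r < 1`, `m (1 - r²) = 1 + r²` and `√((m + 1)/(m - 1)) = 1/r`,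
so that `β₁ = (1 - r)(2 + r)/(1 + r) > 0` and `β₂ = -(1 - r)/(r (1 + r)) < 0`. After clearing
denominators, each of the four bounds is a polynomial inequality in `r` which holds as soon as
`r² ≥ 1/3`, i.e. `m ≥ 2`.
-/

open Real

section SqrtRatio

variable {m : ℝ}

lemma sqrt_ratio_pos (hm : 1 < m) : 0 < √((m - 1) / (m + 1)) :=
  sqrt_pos.mpr (div_pos (by linarith) (by linarith))

lemma sqrt_ratio_lt_one (hm : 1 < m) : √((m - 1) / (m + 1)) < 1 := by
  rw [sqrt_lt' one_pos, one_pow, div_lt_one (by linarith)]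
  linarith

lemma one_third_le_sq_sqrt_ratio (hm : 2 ≤ m) : 1 / 3 ≤ √((m - 1) / (m + 1)) ^ 2 := by
  rw [sq_sqrt (div_nonneg (by linarith) (by linarith)), div_le_div_iff₀ (by norm_num) (by linarith)]
  linarith

lemma mul_one_sub_sq_sqrt_ratio (hm : 1 < m) :
    m * (1 - √((m - 1) / (m + 1)) ^ 2) = 1 + √((m - 1) / (m + 1)) ^ 2 := by
  rw [sq_sqrt (div_nonneg (by linarith) (by linarith))]
  field_simp
  ring

lemma sqrt_ratio_inv : √((m + 1) / (m - 1)) = (√((m - 1) / (m + 1)))⁻¹ := by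
  rw [← sqrt_inv, inv_div]

end SqrtRatio

/-- With `r = √((m - 1)/(m + 1))`, `β₁ = betaOne r` and `β₂ = -betaTwo r`. -/
noncomputable def betaOne (r : ℝ) : ℝ := (1 - r) * (2 + r) / (1 + r)

noncomputable def betaTwo (r : ℝ) : ℝ := (1 - r) / (r * (1 + r))

section Param

variable {m r : ℝ}

lemma add_one_sub_mul_eq_betaOne (hr : 0 < r) (h : m * (1 - r ^ 2) = 1 + r ^ 2) :
    m + 1 - (m + 2) * r = betaOne r := by
  rw [betaOne, eq_div_iff (by positivity)]
  linear_combination h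

lemma add_one_sub_mul_inv_eq_neg_betaTwo (hr : 0 < r) (h : m * (1 - r ^ 2) = 1 + r ^ 2) :
    m + 1 - m * r⁻¹ = -betaTwo r := by
  rw [betaTwo]
  field_simp
  linear_combination -h

end Param

section Bounds

variable {r : ℝ}

lemma betaOne_pos (hr0 : 0 < r) (hr1 : r < 1) : 0 < betaOne r :=
  div_pos (by nlinarith) (by linarith)

lemma betaTwo_pos (hr0 : 0 < r) (hr1 : r < 1) : 0 < betaTwo r :=
  div_pos (by linarith) (by positivity)

lemma betaOne_lt_one (hr0 : 0 < r) (hr : 1 / 3 ≤ r ^ 2) : betaOne r < 1 := by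
  rw [betaOne, div_lt_one (by linarith)]
  nlinarith

lemma betaTwo_lt_one (hr0 : 0 < r) (hr : 1 / 3 ≤ r ^ 2) : betaTwo r < 1 := by
  rw [betaTwo, div_lt_one (by positivity)]
  nlinarith

lemma betaOne_add_half_betaTwo_lt_one (hr0 : 0 < r) (hr : 1 / 3 ≤ r ^ 2) :
    betaOne r + betaTwo r / 2 < 1 := by
  rw [betaOne, betaTwo, div_div, div_add_div _ _ (by positivity) (by positivity),
    div_lt_one (by positivity)]
  nlinarith

lemma betaTwo_add_half_betaOne_lt_one (hr0 : 0 < r) (hr : 1 / 3 ≤ r ^ 2) :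
    betaTwo r + betaOne r / 2 < 1 := by
  rw [betaOne, betaTwo, div_div, div_add_div _ _ (by positivity) (by positivity),
    div_lt_one (by positivity)]
  have hr_half : 1 / 2 < r := by nlinarith
  nlinarith [mul_pos hr0 hr0]

end Bounds

theorem beta_bounds (m : ℤ) (hm : 2 ≤ m)
    (β₁ β₂ : ℝ)
    (hβ₁ : β₁ = m + 1 - (m + 2) * Real.sqrt ((m - 1) / (m + 1)))
    (hβ₂ : β₂ = m + 1 - m * Real.sqrt ((m + 1) / (m - 1))) :
    |β₁| < 1 ∧ |β₂| < 1 ∧ |β₁| + |β₂| / 2 < 1 ∧ |β₂| + |β₁| / 2 < 1 := by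
  have hm₂ : (2 : ℝ) ≤ m := by exact_mod_cast hm
  have hm₁ : (1 : ℝ) < m := by linarith
  rw [sqrt_ratio_inv] at hβ₂
  set r := √(((m : ℝ) - 1) / (m + 1))
  have hr0 : 0 < r := sqrt_ratio_pos hm₁
  have hr1 : r < 1 := sqrt_ratio_lt_one hm₁
  have hr : 1 / 3 ≤ r ^ 2 := one_third_le_sq_sqrt_ratio hm₂
  have hmr : (m : ℝ) * (1 - r ^ 2) = 1 + r ^ 2 := mul_one_sub_sq_sqrt_ratio hm₁
  rw [add_one_sub_mul_eq_betaOne hr0 hmr] at hβ₁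
  rw [add_one_sub_mul_inv_eq_neg_betaTwo hr0 hmr] at hβ₂
  rw [hβ₁, hβ₂, abs_neg, abs_of_pos (betaOne_pos hr0 hr1), abs_of_pos (betaTwo_pos hr0 hr1)]
  exact ⟨betaOne_lt_one hr0 hr, betaTwo_lt_one hr0 hr,
    betaOne_add_half_betaTwo_lt_one hr0 hr, betaTwo_add_half_betaOne_lt_one hr0 hr⟩
end

section
/- Let (V, q) be a real quadratic space with orthogonal complex structure J and X ∈ V with q(X) = 1. In the complexified Clifford algebra, the element γ(X∧JX - Ω/m)·γ(JX∧X - Ω/m) equals 1 + γ(Ω)²/m²; consequently, on any eigenvector φ with γ(Ω)φ = i(m-2r)φ, this element acts as multiplication by 4r(m-r)/m², which is invertible when 0 < r < m. -/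
open scoped RealInnerProductSpace

/-- In the complexified Clifford algebra of a `2m`-dimensional `(V,q)`
(convention `X·X = -q(X)`), for `X` with `q(X)=1`:
`γ(X∧JX - Ω/m)·γ(JX∧X - Ω/m) = 1 + γ(Ω)²/m²`; consequently it acts on an
eigenvector `φ` with `γ(Ω)φ = i(m-2r)φ` as the scalar `4r(m-r)/m²`, which is
invertible for `0 < r < m`. -/
theorem clifford_trace_free_invertibility
    (m : ℕ) (hm : 1 ≤ m)
    (V : Type*) [NormedAddCommGroup V] [InnerProductSpace ℝ V]
    (b : OrthonormalBasis (Fin (2 * m)) ℝ V)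
    (J : V →ₗ[ℝ] V)
    (hJ2 : ∀ x, J (J x) = -x)
    (hJorth : ∀ x y, ⟪J x, J y⟫ = ⟪x, y⟫)
    (A : Type*) [Ring A] [Algebra ℂ A]
    (γ : V →ₗ[ℝ] A)
    (hcl : ∀ x y : V, γ x * γ y + γ y * γ x = algebraMap ℂ A (-2 * ⟪x, y⟫))
    (Ω : A) (hΩ : Ω = ∑ k, (1 / 2 : ℂ) • (γ (b k) * γ (J (b k))))
    (X : V) (hX : ⟪X, X⟫ = 1) :
    ((γ X * γ (J X) - (1 / (m : ℂ)) • Ω) * (γ (J X) * γ X - (1 / (m : ℂ)) • Ω) =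
      1 + (1 / (m : ℂ) ^ 2) • (Ω * Ω)) ∧
    (∀ (S : Type*) [AddCommGroup S] [Module A S], ∀ (r : ℕ) (φ : S),
      r ≤ m →
      Ω • φ = (algebraMap ℂ A (Complex.I * ((m : ℂ) - 2 * r))) • φ →
      ((γ X * γ (J X) - (1 / (m : ℂ)) • Ω) * (γ (J X) * γ X - (1 / (m : ℂ)) • Ω)) • φ =
        (algebraMap ℂ A ((4 * r * ((m : ℂ) - r)) / (m : ℂ) ^ 2)) • φ) ∧
    (∀ r : ℕ, 0 < r → r < m → IsUnit ((4 * r * ((m : ℂ) - r)) / (m : ℂ) ^ 2)) := by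
  have hm0 : (m : ℂ) ≠ 0 := Nat.cast_ne_zero.mpr (by omega)
  -- skew-adjointness of J
  have hskew : ∀ x y : V, ⟪x, J y⟫ = -⟪J x, y⟫ := by
    intro x y
    have h := hJorth x (J y)
    rw [hJ2 y, inner_neg_right] at h
    linarith
  have hXJX : ⟪X, J X⟫ = 0 := by
    have h1 := hskew X X
    have h2 := real_inner_comm X (J X)
    linarith
  have hJXJX : ⟪J X, J X⟫ = 1 := by rw [hJorth, hX]
  -- scalar-manipulation helpers
  have hRC : ∀ (r : ℝ) (w : A), ((r : ℂ)) • w = r • w := by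
    intro r w
    rw [← Complex.coe_algebraMap]; exact algebraMap_smul ℂ r w
  have hsmulL : ∀ (t : ℂ) (w : A), algebraMap ℂ A t * w = t • w :=
    fun t w => (Algebra.smul_def t w).symm
  have hsmulR : ∀ (t : ℂ) (w : A), w * algebraMap ℂ A t = t • w := by
    intro t w
    rw [← Algebra.commutes]
    exact (Algebra.smul_def t w).symm
  -- square lemma
  have hsq : ∀ x : V, γ x * γ x = algebraMap ℂ A (-(⟪x, x⟫ : ℝ)) := by
    intro x
    calc γ x * γ x = (1/2 : ℂ) • ((2 : ℂ) • (γ x * γ x)) := by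
          rw [smul_smul]; norm_num
      _ = (1/2 : ℂ) • algebraMap ℂ A (-2 * ⟪x, x⟫) := by rw [two_smul, hcl x x]
      _ = algebraMap ℂ A (-(⟪x, x⟫ : ℝ)) := by
          rw [Algebra.smul_def, ← map_mul]
          congr 1
          ring
  have hsum1 : ∀ y : V, ∑ k, ⟪b k, y⟫ • γ (J (b k)) = γ (J y) := by
    intro y
    have h1 : ∑ k, ⟪b k, y⟫ • γ (J (b k)) = (γ ∘ₗ J) (∑ k, ⟪b k, y⟫ • b k) := by
      rw [map_sum]; simp
    rw [h1, b.sum_repr' y]; rfl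
  have hsum2 : ∀ y : V, ∑ k, ⟪b k, y⟫ • γ (b k) = γ y := by
    intro y
    have h1 : ∑ k, ⟪b k, y⟫ • γ (b k) = γ (∑ k, ⟪b k, y⟫ • b k) := by
      rw [map_sum]; simp
    rw [h1, b.sum_repr' y]
  -- commutator lemma: [Ω, γ x] = 2 γ (J x)
  have hcomm : ∀ x : V, Ω * γ x = γ x * Ω + γ (J x) + γ (J x) := by
    intro x
    have key : ∀ k : Fin (2 * m), (1 / 2 : ℂ) • (γ (b k) * γ (J (b k))) * γ x
        = γ x * ((1 / 2 : ℂ) • (γ (b k) * γ (J (b k)))) + ⟪b k, x⟫ • γ (J (b k))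
          + ⟪b k, J x⟫ • γ (b k) := by
      intro k
      set e := b k with he
      have hex : γ e * γ x = algebraMap ℂ A (-2 * ⟪x, e⟫) - γ x * γ e :=
        eq_sub_of_add_eq' (hcl x e)
      have hfx : γ (J e) * γ x = algebraMap ℂ A (-2 * ⟪x, J e⟫) - γ x * γ (J e) :=
        eq_sub_of_add_eq' (hcl x (J e))
      have step : γ e * (γ (J e) * γ x)
          = ((-2 * ⟪x, J e⟫ : ℂ)) • γ e - ((-2 * ⟪x, e⟫ : ℂ)) • γ (J e)
            + γ x * (γ e * γ (J e)) := by
        calc γ e * (γ (J e) * γ x)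
            = γ e * algebraMap ℂ A (-2 * ⟪x, J e⟫) - (γ e * γ x) * γ (J e) := by
              rw [hfx, mul_sub, mul_assoc]
          _ = ((-2 * ⟪x, J e⟫ : ℂ)) • γ e
              - (algebraMap ℂ A (-2 * ⟪x, e⟫) - γ x * γ e) * γ (J e) := by
              rw [hsmulR, hex]
          _ = ((-2 * ⟪x, J e⟫ : ℂ)) • γ e - ((-2 * ⟪x, e⟫ : ℂ)) • γ (J e)
              + γ x * (γ e * γ (J e)) := by
              rw [sub_mul, hsmulL, mul_assoc]
              abel
      have c1 : (1/2 : ℂ) • (((-2 * ⟪x, J e⟫ : ℂ)) • γ e) = ⟪b k, J x⟫ • γ (b k) := by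
        rw [smul_smul, ← he]
        have : (1/2 : ℂ) * (-2 * ⟪x, J e⟫) = ((⟪e, J x⟫ : ℝ) : ℂ) := by
          rw [hskew x e, real_inner_comm e (J x)]
          push_cast; ring
        rw [this, hRC]
      have c2 : (1/2 : ℂ) • (((-2 * ⟪x, e⟫ : ℂ)) • γ (J e)) = -(⟪b k, x⟫ • γ (J (b k))) := by
        rw [smul_smul, ← he]
        have : (1/2 : ℂ) * (-2 * ⟪x, e⟫) = ((-⟪e, x⟫ : ℝ) : ℂ) := by
          rw [real_inner_comm e x]; push_cast; ring
        rw [this, hRC, neg_smul]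
      calc (1 / 2 : ℂ) • (γ (b k) * γ (J (b k))) * γ x
          = (1/2 : ℂ) • (γ e * (γ (J e) * γ x)) := by
            rw [smul_mul_assoc, mul_assoc]
        _ = (1/2 : ℂ) • (((-2 * ⟪x, J e⟫ : ℂ)) • γ e)
            - (1/2 : ℂ) • (((-2 * ⟪x, e⟫ : ℂ)) • γ (J e))
            + (1/2 : ℂ) • (γ x * (γ e * γ (J e))) := by
            rw [step, smul_add, smul_sub]
        _ = γ x * ((1 / 2 : ℂ) • (γ (b k) * γ (J (b k)))) + ⟪b k, x⟫ • γ (J (b k))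
            + ⟪b k, J x⟫ • γ (b k) := by
            rw [c1, c2, mul_smul_comm, ← he]
            abel
    calc Ω * γ x = ∑ k, (1 / 2 : ℂ) • (γ (b k) * γ (J (b k))) * γ x := by
          rw [hΩ, Finset.sum_mul]
      _ = ∑ k, (γ x * ((1 / 2 : ℂ) • (γ (b k) * γ (J (b k)))) + ⟪b k, x⟫ • γ (J (b k))
            + ⟪b k, J x⟫ • γ (b k)) := Finset.sum_congr rfl fun k _ => key k
      _ = γ x * Ω + γ (J x) + γ (J x) := by
          rw [Finset.sum_add_distrib, Finset.sum_add_distrib, ← Finset.mul_sum, ← hΩ,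
            hsum1 x, hsum2 (J x)]
  have hsqX : γ X * γ X = -1 := by
    rw [hsq X, hX]; simp
  have hsqJX : γ (J X) * γ (J X) = -1 := by
    rw [hsq (J X), hJXJX]; simp
  have hΩa : Ω * (γ X * γ (J X)) = (γ X * γ (J X)) * Ω := by
    have h1 := hcomm X
    have h2 := hcomm (J X)
    rw [hJ2 X, map_neg] at h2
    calc Ω * (γ X * γ (J X)) = (Ω * γ X) * γ (J X) := by rw [mul_assoc]
      _ = (γ X * Ω + γ (J X) + γ (J X)) * γ (J X) := by rw [h1]
      _ = γ X * (Ω * γ (J X)) + (γ (J X) * γ (J X) + γ (J X) * γ (J X)) := by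
          noncomm_ring
      _ = γ X * (γ (J X) * Ω + -γ X + -γ X) + (-1 + -1) := by rw [h2, hsqJX]
      _ = (γ X * γ (J X)) * Ω - (γ X * γ X + γ X * γ X) + (-1 + -1) := by noncomm_ring
      _ = (γ X * γ (J X)) * Ω := by rw [hsqX]; noncomm_ring
  have hanti : γ (J X) * γ X = -(γ X * γ (J X)) := by
    have h := hcl X (J X)
    rw [hXJX] at h
    simp only [Complex.ofReal_zero, mul_zero, map_zero] at h
    exact eq_neg_of_add_eq_zero_right h
  set a := γ X * γ (J X) with ha
  set u := (1 / (m : ℂ)) • Ω with hu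
  have haa : a * a = -1 := by
    calc a * a = γ X * (γ (J X) * γ X) * γ (J X) := by rw [ha]; noncomm_ring
      _ = γ X * (-(γ X * γ (J X))) * γ (J X) := by rw [hanti]
      _ = -((γ X * γ X) * (γ (J X) * γ (J X))) := by noncomm_ring
      _ = -1 := by rw [hsqX, hsqJX]; noncomm_ring
  have hua : u * a = a * u := by
    rw [hu, smul_mul_assoc, mul_smul_comm, hΩa]
  have main : (a - u) * (γ (J X) * γ X - u) = 1 + (1 / (m : ℂ) ^ 2) • (Ω * Ω) := by
    rw [hanti]
    have expand : (a - u) * (-a - u) = -(a * a) + (u * a - a * u) + u * u := by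
      noncomm_ring
    rw [expand, haa, hua, sub_self, add_zero, neg_neg]
    congr 1
    rw [hu, smul_mul_assoc, mul_smul_comm, smul_smul]
    congr 1
    rw [div_mul_div_comm, one_mul, sq]
  refine ⟨main, ?_, ?_⟩
  · intro S _ _ r φ hrm hφ
    have hcen : ∀ (c : ℂ) (ψ : S), Ω • (algebraMap ℂ A c) • ψ = (algebraMap ℂ A c) • Ω • ψ := by
      intro c ψ
      rw [← mul_smul, ← Algebra.commutes c Ω, mul_smul]
    set lam := Complex.I * ((m : ℂ) - 2 * r) with hlam
    have hscalar : (1 : ℂ) + 1 / (m : ℂ) ^ 2 * (lam * lam)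
        = (4 * r * ((m : ℂ) - r)) / (m : ℂ) ^ 2 := by
      rw [hlam]
      field_simp
      linear_combination (((m : ℂ) - 2 * (r : ℂ)) ^ 2) * Complex.I_mul_I
    calc ((a - u) * (γ (J X) * γ X - u)) • φ
        = (1 + (1 / (m : ℂ) ^ 2) • (Ω * Ω)) • φ := by rw [main]
      _ = (1 : A) • φ + algebraMap ℂ A (1 / (m : ℂ) ^ 2) • Ω • Ω • φ := by
          rw [add_smul, Algebra.smul_def, mul_smul, mul_smul]
      _ = (1 : A) • φ + algebraMap ℂ A (1 / (m : ℂ) ^ 2 * (lam * lam)) • φ := by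
          rw [hφ, hcen, hφ, ← mul_smul, ← mul_smul, ← map_mul, ← map_mul, mul_assoc]
      _ = algebraMap ℂ A ((1 : ℂ) + 1 / (m : ℂ) ^ 2 * (lam * lam)) • φ := by
          rw [map_add, map_one, add_smul, one_smul]
      _ = (algebraMap ℂ A ((4 * r * ((m : ℂ) - r)) / (m : ℂ) ^ 2)) • φ := by
          rw [hscalar]
  · intro r hr hrm
    rw [isUnit_iff_ne_zero]
    have hr0 : (r : ℂ) ≠ 0 := Nat.cast_ne_zero.mpr (by omega)
    have hmr : (m : ℂ) - r ≠ 0 := by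
      rw [sub_ne_zero]
      exact_mod_cast fun h => (by omega : m ≠ r) (Nat.cast_injective h)
    exact div_ne_zero (mul_ne_zero (mul_ne_zero (by norm_num : (4:ℂ) ≠ 0) hr0) hmr)
      (pow_ne_zero 2 hm0)
end

section
/- Let m = 2n ≥ 2 and let S = S₀ ⊕ ... ⊕ S_m be a direct sum of complex inner product spaces with orthogonal projections π_j, and let Ω act as the operator i(m-2j) on S_j. Define 𝒯 = -i(m+1)·Id + iβ₁π_{n-1} + iβ₂π_n for real β₁, β₂. Suppose for each vector X the operators a(X), b(X) satisfy a(X)* = -b(X) on adjacent summands as for γ(X^{1,0}), γ(X^{0,1}) (i.e. (γ(X^{1,0})π_j)* = -γ(X^{0,1})π_{j+1}). Then with 𝔗_X = i(α₁γ(X^{1,0})π_{n-1} + α₂γ(X^{0,1})π_n + β₁γ(X^{1,0})π_{n-2} + β₂γ(X^{0,1})π_{n+1}) and α₁ - α₂ + β₁ - β₂ = 0, the operator 𝔗_X + γ(X)∘𝒯 is self-adjoint. -/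
open ContinuousLinearMap

/-- Self-adjointness of the boundary operator building block `𝔗_X + γ(X)∘𝒯`.
Here `S = S₀ ⊕ ⋯ ⊕ S_m` (`m = 2n`) with orthogonal projections `π j`
(indexed by `ℤ`, with `π j = 0` for `j < 0` or `j > m`), `Ω` acts as
`i(m-2j)` on `S_j`, `γ(X) = γ^{1,0}(X) + γ^{0,1}(X)` is skew-adjoint with
`(γ^{1,0}(X)π_j)* = -γ^{0,1}(X)π_{j+1}`, and
`α₁ - α₂ + β₁ - β₂ = 0`. -/
theorem killing_boundary_operator_selfadjoint
    (n : ℕ) (hn : 1 ≤ n)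
    (S : Type*) [NormedAddCommGroup S] [InnerProductSpace ℂ S] [CompleteSpace S]
    (π : ℤ → (S →L[ℂ] S))
    (hπadj : ∀ j, adjoint (π j) = π j)
    (hππ : ∀ j k, (π j).comp (π k) = if j = k then π j else 0)
    (hπzero : ∀ j : ℤ, j < 0 ∨ (2 * n : ℤ) < j → π j = 0)
    (hπsum : ∑ j ∈ Finset.Icc (0 : ℤ) (2 * n), π j = 1)
    (Ω : S →L[ℂ] S)
    (hΩ : ∀ j : ℤ, Ω.comp (π j) = (Complex.I * ((2 * n : ℤ) - 2 * j)) • π j)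
    (V : Type*)
    (γ10 γ01 : V → (S →L[ℂ] S))
    -- `γ^{1,0}(X)` maps `S_j` to `S_{j+1}`, `γ^{0,1}(X)` maps `S_{j+1}` to `S_j`
    (hmap10 : ∀ (X : V) (j : ℤ), (γ10 X).comp (π j) = (π (j + 1)).comp ((γ10 X).comp (π j)))
    (hmap01 : ∀ (X : V) (j : ℤ), (γ01 X).comp (π (j + 1)) = (π j).comp ((γ01 X).comp (π (j + 1))))
    (hadj : ∀ (X : V) (j : ℤ), adjoint ((γ10 X).comp (π j)) = -((γ01 X).comp (π (j + 1))))
    (hskew : ∀ X : V, adjoint (γ10 X + γ01 X) = -(γ10 X + γ01 X))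
    (α₁ α₂ β₁ β₂ : ℝ)
    (hrel : α₁ - α₂ + β₁ - β₂ = 0) :
    ∀ X : V,
      IsSelfAdjoint
        (Complex.I • ((α₁ : ℂ) • ((γ10 X).comp (π ((n : ℤ) - 1)))
            + (α₂ : ℂ) • ((γ01 X).comp (π (n : ℤ)))
            + (β₁ : ℂ) • ((γ10 X).comp (π ((n : ℤ) - 2)))
            + (β₂ : ℂ) • ((γ01 X).comp (π ((n : ℤ) + 1))))
          + (γ10 X + γ01 X).comp
            ((-(Complex.I * ((2 * n : ℂ) + 1))) • (1 : S →L[ℂ] S)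
              + (Complex.I * (β₁ : ℂ)) • π ((n : ℤ) - 1)
              + (Complex.I * (β₂ : ℂ)) • π (n : ℤ))) := by

  intro X
  rw [isSelfAdjoint_iff]
  simp only [← ContinuousLinearMap.mul_def] at hmap10 hmap01 hadj hππ ⊢
  simp only [← ContinuousLinearMap.star_eq_adjoint] at hadj hπadj hskew
  -- commutation relations
  have h1 : ∀ j : ℤ, π j * γ10 X = γ10 X * π (j - 1) := by
    intro j
    have key : ∀ k ∈ Finset.Icc (0:ℤ) (2*n),
        π j * (γ10 X * π k) = if j - 1 = k then γ10 X * π k else 0 := by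
      intro k _
      rw [hmap10 X k, ← mul_assoc, hππ]
      by_cases h : j = k + 1
      · rw [if_pos h, if_pos (by omega), h, ← hmap10 X k]
      · rw [if_neg h, if_neg (by omega), zero_mul]
    calc π j * γ10 X = π j * (γ10 X * ∑ k ∈ Finset.Icc (0:ℤ) (2*n), π k) := by
          rw [hπsum, mul_one]
      _ = ∑ k ∈ Finset.Icc (0:ℤ) (2*n), π j * (γ10 X * π k) := by
          rw [Finset.mul_sum, Finset.mul_sum]
      _ = ∑ k ∈ Finset.Icc (0:ℤ) (2*n), if j - 1 = k then γ10 X * π k else 0 :=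
          Finset.sum_congr rfl key
      _ = γ10 X * π (j-1) := by
          rw [Finset.sum_ite_eq]
          by_cases h : j - 1 ∈ Finset.Icc (0:ℤ) (2*n)
          · rw [if_pos h]
          · have hz : π (j-1) = 0 := hπzero _ (by rw [Finset.mem_Icc] at h; omega)
            rw [if_neg h, hz, mul_zero]
  have h2 : ∀ j : ℤ, π j * γ01 X = γ01 X * π (j + 1) := by
    intro j
    have key : ∀ k ∈ Finset.Icc (0:ℤ) (2*n),
        π j * (γ01 X * π k) = if j + 1 = k then γ01 X * π k else 0 := by
      intro k _
      have hm := hmap01 X (k-1)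
      rw [show k - 1 + 1 = k from by ring] at hm
      rw [hm, ← mul_assoc, hππ]
      by_cases h : j = k - 1
      · rw [if_pos h, if_pos (by omega), h, ← hm]
      · rw [if_neg h, if_neg (by omega), zero_mul]
    calc π j * γ01 X = π j * (γ01 X * ∑ k ∈ Finset.Icc (0:ℤ) (2*n), π k) := by
          rw [hπsum, mul_one]
      _ = ∑ k ∈ Finset.Icc (0:ℤ) (2*n), π j * (γ01 X * π k) := by
          rw [Finset.mul_sum, Finset.mul_sum]
      _ = ∑ k ∈ Finset.Icc (0:ℤ) (2*n), if j + 1 = k then γ01 X * π k else 0 :=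
          Finset.sum_congr rfl key
      _ = γ01 X * π (j+1) := by
          rw [Finset.sum_ite_eq]
          by_cases h : j + 1 ∈ Finset.Icc (0:ℤ) (2*n)
          · rw [if_pos h]
          · have hz : π (j+1) = 0 := hπzero _ (by rw [Finset.mem_Icc] at h; omega)
            rw [if_neg h, hz, mul_zero]
  -- star relations
  have sB : ∀ j : ℤ, star (γ01 X * π j) = -(γ10 X * π (j-1)) := by
    intro j
    have h := congrArg star (hadj X (j-1))
    rw [star_star, star_neg, show j - 1 + 1 = j from by ring] at h
    exact neg_eq_iff_eq_neg.mp h.symm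
  have hA1 : star (γ10 X * π ((n:ℤ)-1)) = -(γ01 X * π (n:ℤ)) := by
    rw [hadj, show (n:ℤ)-1+1 = (n:ℤ) from by ring]
  have hA2 : star (γ10 X * π ((n:ℤ)-2)) = -(γ01 X * π ((n:ℤ)-1)) := by
    rw [hadj, show (n:ℤ)-2+1 = (n:ℤ)-1 from by ring]
  have hB1 : star (γ01 X * π (n:ℤ)) = -(γ10 X * π ((n:ℤ)-1)) := sB _
  have hB2 : star (γ01 X * π ((n:ℤ)+1)) = -(γ10 X * π (n:ℤ)) := by
    rw [sB, show (n:ℤ)+1-1 = (n:ℤ) from by ring]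
  have hc1 : π ((n:ℤ)-1) * γ10 X = γ10 X * π ((n:ℤ)-2) := by
    rw [h1, show (n:ℤ)-1-1 = (n:ℤ)-2 from by ring]
  have hc2 : π ((n:ℤ)-1) * γ01 X = γ01 X * π (n:ℤ) := by
    rw [h2, show (n:ℤ)-1+1 = (n:ℤ) from by ring]
  have hc3 : π (n:ℤ) * γ10 X = γ10 X * π ((n:ℤ)-1) := by
    rw [h1]
  have hc4 : π (n:ℤ) * γ01 X = γ01 X * π ((n:ℤ)+1) := h2 _
  have hrelC : (α₁:ℂ) - α₂ + β₁ - β₂ = 0 := by exact_mod_cast hrel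
  rw [star_add, star_smul]
  simp only [star_add, star_smul, hA1, hA2, hB1, hB2]
  rw [star_mul, hskew]
  simp only [star_add, star_smul, hπadj, star_one]
  simp only [Complex.star_def, map_neg, map_mul, map_add, map_one, map_ofNat,
    Complex.conj_I, Complex.conj_ofReal, Complex.conj_natCast]
  simp only [mul_add, add_mul, mul_smul_comm, smul_mul_assoc, mul_one, one_mul,
    mul_neg, neg_mul, hc1, hc2, hc3, hc4, smul_neg, neg_smul, neg_neg, neg_add]
  match_scalars <;>
    first
      | ring1
      | linear_combination Complex.I * hrelC
      | linear_combination (-Complex.I) * hrelC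
end
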